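/- arXiv:2401.14710 — 2 statements merged into one kernel-verified Lean document; each statement's English description precedes it below -/
import Mathlib

section
/- For every t in (0,1], the binary entropy function h satisfies t ≤ (1 - 2·h⁻¹(1-t))², where h⁻¹ denotes the inverse of h restricted to [0,1/2]. Equivalently, the SDPI coefficient η_t = (1 - 2·h⁻¹(1-t))² of a BSC with capacity t satisfies η_t ≥ t. -/
/-! With `p = h⁻¹(1 - t)` the claim is `4p(1 - p) ≤ h(p)`, because `(1 - 2p)² = 1 - 4p(1 - p)`.
In nats, the gap `binEntropy p - 4 log 2 · p(1 - p)` vanishes at `0` and `1/2`, and its second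
derivative `8 log 2 - 1/(p(1 - p))` changes sign exactly once on `(0, 1/2)`, at some `c`.
On `[0, c]` the gap is concave, so it lies above its chord; on `[c, 1/2]` its derivative
increases to `0` at `1/2`, so the gap decreases to `0`. -/

/-- Binary entropy function (base-2 logarithms). -/
noncomputable def hbin (x : ℝ) : ℝ := -x * Real.logb 2 x - (1 - x) * Real.logb 2 (1 - x)

open Real Set

lemma hbin_eq_binEntropy_div_log_two (x : ℝ) : hbin x = binEntropy x / log 2 := by
  simp only [hbin, binEntropy, logb, log_inv]
  ring

noncomputable def binEntropyGap (p : ℝ) : ℝ := binEntropy p - 4 * log 2 * (p * (1 - p))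

noncomputable def binEntropyGapDeriv (p : ℝ) : ℝ :=
  log (1 - p) - log p - 4 * log 2 * (1 - 2 * p)

lemma binEntropyGap_one_sub (p : ℝ) : binEntropyGap (1 - p) = binEntropyGap p := by
  simp only [binEntropyGap, binEntropy_one_sub]
  ring

lemma binEntropyGap_zero : binEntropyGap 0 = 0 := by simp [binEntropyGap]

lemma binEntropyGap_two_inv : binEntropyGap 2⁻¹ = 0 := by
  simp only [binEntropyGap, binEntropy_two_inv]
  ring

lemma binEntropyGapDeriv_two_inv : binEntropyGapDeriv 2⁻¹ = 0 := by
  norm_num [binEntropyGapDeriv]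

lemma continuous_binEntropyGap : Continuous binEntropyGap := by
  unfold binEntropyGap
  fun_prop

lemma hasDerivAt_binEntropyGap {p : ℝ} (hp₀ : p ≠ 0) (hp₁ : p ≠ 1) :
    HasDerivAt binEntropyGap (binEntropyGapDeriv p) p := by
  have hquad : HasDerivAt (fun x : ℝ => x * (1 - x)) (1 - 2 * p) p := by
    simpa using
      ((hasDerivAt_id' p).fun_mul ((hasDerivAt_id' p).const_sub 1)).congr_deriv (by ring)
  exact (hasDerivAt_binEntropy hp₀ hp₁).sub (hquad.const_mul (4 * log 2))

lemma hasDerivAt_binEntropyGapDeriv {p : ℝ} (hp₀ : p ≠ 0) (hp₁ : p ≠ 1) :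
    HasDerivAt binEntropyGapDeriv (8 * log 2 - (p * (1 - p))⁻¹) p := by
  have h1p : 1 - p ≠ 0 := sub_ne_zero.mpr hp₁.symm
  have hlog := ((hasDerivAt_id' p).const_sub 1).log h1p
  have hlin := ((hasDerivAt_id' p).const_mul 2).const_sub 1 |>.const_mul (4 * log 2)
  refine ((hlog.sub (hasDerivAt_log hp₀)).sub hlin).congr_deriv ?_
  field_simp
  ring

lemma exists_mul_one_sub_eq {a : ℝ} (ha₀ : 0 ≤ a) (ha : a ≤ 4⁻¹) :
    ∃ c ∈ Icc (0 : ℝ) 2⁻¹, c * (1 - c) = a :=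
  intermediate_value_Icc (by norm_num) (by fun_prop) ⟨by simpa, by norm_num; linarith⟩

lemma concaveOn_binEntropyGap {c : ℝ} (hc : c ≤ 2⁻¹)
    (hcc : 8 * log 2 * (c * (1 - c)) ≤ 1) :
    ConcaveOn ℝ (Icc 0 c) binEntropyGap := by
  refine concaveOn_of_hasDerivWithinAt2_nonpos (convex_Icc 0 c)
    continuous_binEntropyGap.continuousOn (f' := binEntropyGapDeriv)
    (f'' := fun x => 8 * log 2 - (x * (1 - x))⁻¹) ?_ ?_ ?_ <;>
    intro x hx <;> rw [interior_Icc] at hx <;> obtain ⟨hx₀, hxc⟩ := hx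
  · exact (hasDerivAt_binEntropyGap hx₀.ne' (by linarith)).hasDerivWithinAt
  · exact (hasDerivAt_binEntropyGapDeriv hx₀.ne' (by linarith)).hasDerivWithinAt
  · have hxx : 0 < x * (1 - x) := mul_pos hx₀ (by linarith)
    have : 8 * log 2 * (x * (1 - x)) ≤ 1 := by
      have := log_pos one_lt_two
      nlinarith [mul_nonneg (sub_nonneg.mpr hxc.le) (by linarith : (0 : ℝ) ≤ 1 - c - x)]
    rwa [sub_nonpos, ← one_div, le_div_iff₀ hxx]

lemma monotoneOn_binEntropyGapDeriv {c : ℝ} (hc₀ : 0 < c)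
    (hcc : 1 ≤ 8 * log 2 * (c * (1 - c))) :
    MonotoneOn binEntropyGapDeriv (Ioc c 2⁻¹) := by
  refine monotoneOn_of_hasDerivWithinAt_nonneg (convex_Ioc c 2⁻¹)
    (fun x hx => (hasDerivAt_binEntropyGapDeriv (by linarith [hx.1]) (by linarith [hx.2]))
      |>.continuousAt.continuousWithinAt)
    (f' := fun x => 8 * log 2 - (x * (1 - x))⁻¹) ?_ ?_ <;>
    intro x hx <;> rw [interior_Ioc] at hx <;> obtain ⟨hcx, hx⟩ := hx
  · exact (hasDerivAt_binEntropyGapDeriv (by linarith) (by linarith)).hasDerivWithinAt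
  · have hxx : 0 < x * (1 - x) := mul_pos (hc₀.trans hcx) (by linarith)
    have : 1 ≤ 8 * log 2 * (x * (1 - x)) := by
      have := log_pos one_lt_two
      nlinarith [mul_nonneg (sub_nonneg.mpr hcx.le) (by linarith : (0 : ℝ) ≤ 1 - c - x)]
    rwa [sub_nonneg, ← one_div, div_le_iff₀ hxx]

lemma antitoneOn_binEntropyGap {c : ℝ} (hc₀ : 0 < c)
    (hcc : 1 ≤ 8 * log 2 * (c * (1 - c))) :
    AntitoneOn binEntropyGap (Icc c 2⁻¹) := by
  refine antitoneOn_of_hasDerivWithinAt_nonpos (convex_Icc c 2⁻¹)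
    continuous_binEntropyGap.continuousOn (f' := binEntropyGapDeriv) ?_ ?_ <;>
    intro x hx <;> rw [interior_Icc] at hx <;> obtain ⟨hcx, hx⟩ := hx
  · exact (hasDerivAt_binEntropyGap (by linarith) (by linarith)).hasDerivWithinAt
  · rw [← binEntropyGapDeriv_two_inv]
    exact monotoneOn_binEntropyGapDeriv hc₀ hcc ⟨hcx, hx.le⟩ ⟨hcx.trans hx, le_rfl⟩ hx.le

lemma binEntropyGap_nonneg_of_le_two_inv {p : ℝ} (hp₀ : 0 ≤ p) (hp : p ≤ 2⁻¹) :
    0 ≤ binEntropyGap p := by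
  have hlog := log_pos one_lt_two
  obtain ⟨c, ⟨hc₀, hc⟩, hc_eq⟩ := exists_mul_one_sub_eq (a := (8 * log 2)⁻¹) (by positivity)
    (by rw [inv_le_inv₀ (by positivity) (by norm_num)]; linarith [log_two_gt_d9])
  have hcc : 8 * log 2 * (c * (1 - c)) = 1 := by rw [hc_eq]; field_simp
  have hc₀ : 0 < c := hc₀.lt_of_ne (by rintro rfl; norm_num at hcc)
  have hright : ∀ x ∈ Icc c 2⁻¹, 0 ≤ binEntropyGap x := fun x hx =>
    binEntropyGap_two_inv ▸ antitoneOn_binEntropyGap hc₀ hcc.ge hx ⟨hc, le_rfl⟩ hx.2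
  rcases le_total p c with hpc | hcp
  · have hchord := (concaveOn_binEntropyGap hc hcc.le).ge_on_segment
      ⟨le_rfl, hc₀.le⟩ ⟨hc₀.le, le_rfl⟩ (by rw [segment_eq_Icc hc₀.le]; exact ⟨hp₀, hpc⟩)
    rw [binEntropyGap_zero] at hchord
    exact (le_min le_rfl (hright c ⟨le_rfl, hc⟩)).trans hchord
  · exact hright p ⟨hcp, hp⟩

lemma binEntropyGap_nonneg {p : ℝ} (hp₀ : 0 ≤ p) (hp₁ : p ≤ 1) :
    0 ≤ binEntropyGap p := by
  rcases le_total p 2⁻¹ with hp | hp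
  · exact binEntropyGap_nonneg_of_le_two_inv hp₀ hp
  · rw [← binEntropyGap_one_sub]
    exact binEntropyGap_nonneg_of_le_two_inv (by linarith) (by linarith)

lemma four_mul_mul_one_sub_le_hbin {p : ℝ} (hp₀ : 0 ≤ p) (hp₁ : p ≤ 1) :
    4 * (p * (1 - p)) ≤ hbin p := by
  have hgap := binEntropyGap_nonneg hp₀ hp₁
  rw [binEntropyGap, sub_nonneg] at hgap
  rw [hbin_eq_binEntropy_div_log_two, le_div_iff₀ (log_pos one_lt_two)]
  linarith

/-- For every `t ∈ (0,1]`, `t ≤ (1 - 2 h⁻¹(1-t))²`, where `hinv` is the inverse of the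
binary entropy function restricted to `[0,1/2]`. -/
theorem sdpi_coeff_ge_capacity (hinv : ℝ → ℝ)
    (hhinv : ∀ y ∈ Set.Icc (0:ℝ) 1, hinv y ∈ Set.Icc (0:ℝ) (1/2) ∧ hbin (hinv y) = y)
    (t : ℝ) (ht0 : 0 < t) (ht1 : t ≤ 1) :
    t ≤ (1 - 2 * hinv (1 - t))^2 := by
  obtain ⟨⟨hp₀, hp⟩, hp_eq⟩ := hhinv (1 - t) ⟨by linarith, by linarith⟩
  have hbound := four_mul_mul_one_sub_le_hbin hp₀ (by linarith)
  rw [hp_eq] at hbound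
  linarith
end

section
/- For fixed p ∈ [0,1/2], the function g(t) = h(p ⋆ h⁻¹(1-t)) - (1-t) on [0,1] is convex in t, where a ⋆ b = a(1-b) + b(1-a). Consequently, since g(0)=0 and g(1)=h(p), it holds that g(t) ≤ t·h(p) for all t ∈ [0,1]. -/
/-- Binary convolution `a ⋆ b = a(1-b) + b(1-a)`. -/
def bconv (a b : ℝ) : ℝ := a * (1 - b) + b * (1 - a)

open Real Set

theorem MonotoneOn.strictMonoOn_of_leftInvOn {α β : Type*} [LinearOrder α] [Preorder β]
    {f : α → β} {g : β → α} {s : Set β} {t : Set α} (hf : MonotoneOn f t) (hg : MapsTo g s t)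
    (hfg : LeftInvOn f g s) : StrictMonoOn g s := by
  intro y₁ hy₁ y₂ hy₂ hlt
  by_contra! hle
  have := hf (hg hy₂) (hg hy₁) hle
  rw [hfg hy₁, hfg hy₂] at this
  exact hlt.not_ge this

theorem MonotoneOn.continuousOn_of_surjOn_Icc {α β : Type*} [LinearOrder α] [TopologicalSpace α]
    [OrderTopology α] [LinearOrder β] [TopologicalSpace β] [OrderTopology β] [DenselyOrdered β]
    {f : α → β} {a b : α} {c d : β} (hf : MonotoneOn f (Icc a b))
    (hmaps : MapsTo f (Icc a b) (Icc c d)) (hsurj : SurjOn f (Icc a b) (Icc c d)) :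
    ContinuousOn f (Icc a b) := by
  have hmono : Monotone (hmaps.restrict f _ _) := fun x y hxy => hf x.2 y.2 hxy
  have hcont := hmono.continuous_of_surjective (hmaps.restrict_surjective_iff.2 hsurj)
  exact continuousOn_iff_continuous_domRestrict.2 (continuous_subtype_val.comp hcont)

lemma ConvexOn.comp_one_sub {f : ℝ → ℝ} (hf : ConvexOn ℝ (Icc 0 1) f) :
    ConvexOn ℝ (Icc 0 1) (fun t => f (1 - t)) := by
  have hpre : AffineMap.lineMap (1 : ℝ) 0 ⁻¹' Icc 0 1 = Icc (0 : ℝ) 1 := by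
    ext t
    simp only [mem_preimage, AffineMap.lineMap_apply_ring', mem_Icc]
    constructor <;> rintro ⟨h₀, h₁⟩ <;> constructor <;> linarith
  have h := hpre ▸ hf.comp_affineMap (AffineMap.lineMap (1 : ℝ) 0)
  refine h.congr fun t _ => ?_
  simp only [Function.comp_apply, AffineMap.lineMap_apply_ring']
  congr 1
  ring

lemma hbin_eq_binEntropy_div : hbin = fun x => binEntropy x / log 2 := by
  ext x
  simp only [hbin, logb, binEntropy, log_inv]
  ring

lemma continuous_hbin : Continuous hbin :=
  hbin_eq_binEntropy_div ▸ binEntropy_continuous.div_const (log 2)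

lemma hbin_zero : hbin 0 = 0 := by simp [hbin_eq_binEntropy_div]

lemma hbin_half : hbin (1 / 2) = 1 := by
  simp [hbin_eq_binEntropy_div, (log_pos one_lt_two).ne']

lemma strictMonoOn_hbin : StrictMonoOn hbin (Icc 0 (1 / 2)) := by
  intro x hx y hy hxy
  simp only [hbin_eq_binEntropy_div]
  rw [one_div] at hx hy
  exact div_lt_div_of_pos_right (binEntropy_strictMonoOn hx hy hxy) (log_pos one_lt_two)

lemma mapsTo_hbin : MapsTo hbin (Icc 0 (1 / 2)) (Icc 0 1) := fun x hx =>
  ⟨hbin_zero ▸ strictMonoOn_hbin.monotoneOn ⟨le_rfl, by norm_num⟩ hx hx.1,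
    hbin_half ▸ strictMonoOn_hbin.monotoneOn hx ⟨by norm_num, le_rfl⟩ hx.2⟩

noncomputable def entropySlope (x : ℝ) : ℝ := log (1 - x) - log x

lemma hasDerivAt_hbin {x : ℝ} (hx : x ∈ Ioo (0 : ℝ) 1) :
    HasDerivAt hbin (entropySlope x / log 2) x := by
  rw [hbin_eq_binEntropy_div]
  exact (hasDerivAt_binEntropy hx.1.ne' hx.2.ne).div_const (log 2)

lemma entropySlope_pos {x : ℝ} (hx : x ∈ Ioo (0 : ℝ) (1 / 2)) : 0 < entropySlope x :=
  sub_pos.2 (log_lt_log hx.1 (by linarith [hx.2]))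

lemma hasDerivAt_entropySlope {x : ℝ} (hx : x ∈ Ioo (0 : ℝ) 1) :
    HasDerivAt entropySlope (-(x * (1 - x))⁻¹) x := by
  have h := (((hasDerivAt_id' x).const_sub 1).log (sub_pos.2 hx.2).ne').sub
    ((hasDerivAt_id' x).log hx.1.ne')
  refine h.congr_deriv ?_
  have := (sub_pos.2 hx.2).ne'
  have := hx.1.ne'
  field_simp
  ring

noncomputable def scaledEntropySlope (x : ℝ) : ℝ := x * (1 - x) * entropySlope x

lemma continuous_scaledEntropySlope : Continuous scaledEntropySlope := by
  have : scaledEntropySlope = fun x => (1 - x) * negMulLog x - x * negMulLog (1 - x) := by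
    ext x
    simp only [scaledEntropySlope, entropySlope, negMulLog]
    ring
  rw [this]
  fun_prop

lemma scaledEntropySlope_half : scaledEntropySlope (1 / 2) = 0 := by
  norm_num [scaledEntropySlope, entropySlope]

lemma concaveOn_scaledEntropySlope : ConcaveOn ℝ (Icc 0 (1 / 2)) scaledEntropySlope := by
  refine concaveOn_of_hasDerivWithinAt2_nonpos (convex_Icc _ _)
    continuous_scaledEntropySlope.continuousOn (f' := fun x => (1 - 2 * x) * entropySlope x - 1)
    (f'' := fun x => -2 * entropySlope x - (1 - 2 * x) * (x * (1 - x))⁻¹) ?_ ?_ ?_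
    <;> intro x hx <;> rw [interior_Icc] at hx
  · have hx1 : x ∈ Ioo (0 : ℝ) 1 := ⟨hx.1, by linarith [hx.2]⟩
    have hquad : HasDerivAt (fun y => y * (1 - y)) (1 * (1 - x) + x * (-1)) x :=
      (hasDerivAt_id' x).mul ((hasDerivAt_id' x).const_sub 1)
    refine ((hquad.mul (hasDerivAt_entropySlope hx1)).congr_deriv ?_).hasDerivWithinAt
    simp only [mul_neg, mul_inv_cancel₀ (mul_pos hx1.1 (sub_pos.2 hx1.2)).ne']
    ring
  · have hx1 : x ∈ Ioo (0 : ℝ) 1 := ⟨hx.1, by linarith [hx.2]⟩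
    have hlin : HasDerivAt (fun y => 1 - 2 * y) (-2) x := by
      simpa using ((hasDerivAt_id' x).const_mul 2).const_sub 1
    exact (((hlin.mul (hasDerivAt_entropySlope hx1)).sub_const 1).congr_deriv
      (by ring)).hasDerivWithinAt
  · have : 0 < (x * (1 - x))⁻¹ := inv_pos.2 (mul_pos hx.1 (by linarith [hx.2]))
    have := entropySlope_pos hx
    nlinarith [hx.2]

lemma bconv_eq (p x : ℝ) : bconv p x = p + (1 - 2 * p) * x := by
  unfold bconv
  ring

lemma bconv_zero (p : ℝ) : bconv p 0 = p := by simp [bconv]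

lemma bconv_half (p : ℝ) : bconv p (1 / 2) = 1 / 2 := by
  rw [bconv_eq]
  ring

/-- Concavity of `scaledEntropySlope` together with its zero at `1/2`, since
`p ⋆ x = (1 - 2p) x + 2p · 1/2`. -/
lemma mul_scaledEntropySlope_le_bconv {p x : ℝ} (hp : p ∈ Icc (0 : ℝ) (1 / 2))
    (hx : x ∈ Icc (0 : ℝ) (1 / 2)) :
    (1 - 2 * p) * scaledEntropySlope x ≤ scaledEntropySlope (bconv p x) := by
  have h := concaveOn_scaledEntropySlope.2 hx ⟨by norm_num, le_rfl⟩
    (by linarith [hp.2] : (0 : ℝ) ≤ 1 - 2 * p) (by linarith [hp.1] : (0 : ℝ) ≤ 2 * p) (by ring)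
  simp only [smul_eq_mul, scaledEntropySlope_half, mul_zero, add_zero] at h
  rwa [bconv_eq, show p + (1 - 2 * p) * x = (1 - 2 * p) * x + 2 * p * (1 / 2) by ring]

lemma bconv_mem_Ioo {p x : ℝ} (hp : p ∈ Icc (0 : ℝ) (1 / 2)) (hx : x ∈ Ioo (0 : ℝ) (1 / 2)) :
    bconv p x ∈ Ioo (0 : ℝ) 1 := by
  rw [bconv_eq]
  obtain ⟨hp0, hp2⟩ := hp
  obtain ⟨hx0, hx2⟩ := hx
  constructor <;> nlinarith

noncomputable def slopeRatio (p x : ℝ) : ℝ :=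
  (1 - 2 * p) * entropySlope (bconv p x) / entropySlope x

lemma hasDerivAt_slopeRatio {p x : ℝ} (hp : p ∈ Icc (0 : ℝ) (1 / 2))
    (hx : x ∈ Ioo (0 : ℝ) (1 / 2)) :
    HasDerivAt (slopeRatio p)
      ((1 - 2 * p) * (scaledEntropySlope (bconv p x) - (1 - 2 * p) * scaledEntropySlope x) /
        (x * (1 - x) * (bconv p x * (1 - bconv p x)) * entropySlope x ^ 2)) x := by
  have hx1 : x ∈ Ioo (0 : ℝ) 1 := ⟨hx.1, by linarith [hx.2]⟩
  have hy := bconv_mem_Ioo hp hx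
  have hbconv : HasDerivAt (bconv p) (1 - 2 * p) x := by
    simpa [funext (bconv_eq p)] using ((hasDerivAt_id' x).const_mul (1 - 2 * p)).const_add p
  have h := (((hasDerivAt_entropySlope hy).comp x hbconv).const_mul (1 - 2 * p)).div
    (hasDerivAt_entropySlope hx1) (entropySlope_pos hx).ne'
  refine h.congr_deriv ?_
  have := (sub_pos.2 hx1.2).ne'
  have := (sub_pos.2 hy.2).ne'
  have := hx1.1.ne'
  have := hy.1.ne'
  have := (entropySlope_pos hx).ne'
  simp only [scaledEntropySlope, Function.comp_apply]
  field_simp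
  ring

lemma monotoneOn_slopeRatio {p : ℝ} (hp : p ∈ Icc (0 : ℝ) (1 / 2)) :
    MonotoneOn (slopeRatio p) (Ioo 0 (1 / 2)) := by
  refine monotoneOn_of_hasDerivWithinAt_nonneg (convex_Ioo _ _)
    (fun x hx => (hasDerivAt_slopeRatio hp hx).continuousAt.continuousWithinAt)
    (fun x hx => (hasDerivAt_slopeRatio hp (interior_subset hx)).hasDerivWithinAt)
    (fun x hx => ?_)
  rw [interior_Ioo] at hx
  have hy := bconv_mem_Ioo hp hx
  have := mul_scaledEntropySlope_le_bconv hp (Ioo_subset_Icc_self hx)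
  have : 0 ≤ 1 - 2 * p := by linarith [hp.2]
  have : 0 < 1 - x := by linarith [hx.2]
  have : 0 < 1 - bconv p x := sub_pos.2 hy.2
  have := hx.1
  have := hy.1
  positivity

structure IsHbinInverse (g : ℝ → ℝ) : Prop where
  mapsTo : MapsTo g (Icc 0 1) (Icc 0 (1 / 2))
  leftInvOn : LeftInvOn hbin g (Icc 0 1)

namespace IsHbinInverse

variable {g : ℝ → ℝ}

lemma rightInvOn (hg : IsHbinInverse g) : RightInvOn hbin g (Icc 0 (1 / 2)) :=
  strictMonoOn_hbin.injOn.rightInvOn_of_leftInvOn hg.leftInvOn mapsTo_hbin hg.mapsTo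

lemma apply_zero (hg : IsHbinInverse g) : g 0 = 0 := by
  have := hg.rightInvOn (left_mem_Icc.2 (by norm_num : (0 : ℝ) ≤ 1 / 2))
  rwa [hbin_zero] at this

lemma apply_one (hg : IsHbinInverse g) : g 1 = 1 / 2 := by
  have := hg.rightInvOn (right_mem_Icc.2 (by norm_num : (0 : ℝ) ≤ 1 / 2))
  rwa [hbin_half] at this

lemma strictMonoOn (hg : IsHbinInverse g) : StrictMonoOn g (Icc 0 1) :=
  strictMonoOn_hbin.monotoneOn.strictMonoOn_of_leftInvOn hg.mapsTo hg.leftInvOn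

lemma continuousOn (hg : IsHbinInverse g) : ContinuousOn g (Icc 0 1) :=
  hg.strictMonoOn.monotoneOn.continuousOn_of_surjOn_Icc hg.mapsTo
    (hg.rightInvOn.surjOn mapsTo_hbin)

lemma mapsTo_Ioo (hg : IsHbinInverse g) : MapsTo g (Ioo 0 1) (Ioo 0 (1 / 2)) := fun _ hu =>
  ⟨hg.apply_zero ▸ hg.strictMonoOn (left_mem_Icc.2 zero_le_one) (Ioo_subset_Icc_self hu) hu.1,
    hg.apply_one ▸ hg.strictMonoOn (Ioo_subset_Icc_self hu) (right_mem_Icc.2 zero_le_one) hu.2⟩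

lemma hasDerivAt (hg : IsHbinInverse g) {u : ℝ} (hu : u ∈ Ioo (0 : ℝ) 1) :
    HasDerivAt g (entropySlope (g u) / log 2)⁻¹ u := by
  have hx := hg.mapsTo_Ioo hu
  have hnhds : Icc (0 : ℝ) 1 ∈ nhds u := Icc_mem_nhds hu.1 hu.2
  exact HasDerivAt.of_local_left_inverse (hg.continuousOn.continuousAt hnhds)
    (hasDerivAt_hbin ⟨hx.1, hx.2.trans (by norm_num)⟩)
    (div_pos (entropySlope_pos hx) (log_pos one_lt_two)).ne'
    (Filter.eventually_of_mem hnhds hg.leftInvOn)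

lemma hasDerivAt_hbin_bconv_comp (hg : IsHbinInverse g) {p : ℝ} (hp : p ∈ Icc (0 : ℝ) (1 / 2))
    {u : ℝ} (hu : u ∈ Ioo (0 : ℝ) 1) :
    HasDerivAt (fun u => hbin (bconv p (g u))) (slopeRatio p (g u)) u := by
  have hx := hg.mapsTo_Ioo hu
  have hinner : HasDerivAt (fun v => bconv p (g v))
      ((1 - 2 * p) * (entropySlope (g u) / log 2)⁻¹) u := by
    simpa only [bconv_eq] using
      ((hg.hasDerivAt hu).const_mul (1 - 2 * p)).const_add p
  refine ((hasDerivAt_hbin (bconv_mem_Ioo hp hx)).comp u hinner).congr_deriv ?_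
  have := (entropySlope_pos hx).ne'
  have := (log_pos one_lt_two).ne'
  simp only [slopeRatio]
  field_simp

lemma convexOn_hbin_bconv_comp (hg : IsHbinInverse g) {p : ℝ} (hp : p ∈ Icc (0 : ℝ) (1 / 2)) :
    ConvexOn ℝ (Icc 0 1) (fun u => hbin (bconv p (g u))) := by
  have hderiv := fun u (hu : u ∈ interior (Icc (0 : ℝ) 1)) =>
    hg.hasDerivAt_hbin_bconv_comp hp (by rwa [interior_Icc] at hu)
  refine MonotoneOn.convexOn_of_deriv (convex_Icc 0 1) ?_
    (fun u hu => (hderiv u hu).differentiableAt.differentiableWithinAt) ?_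
  · have hbconv : Continuous (bconv p) := by unfold bconv; fun_prop
    exact continuous_hbin.comp_continuousOn
      (hbconv.comp_continuousOn hg.continuousOn)
  · refine ((monotoneOn_slopeRatio hp).comp
      (hg.strictMonoOn.monotoneOn.mono interior_subset) ?_).congr
      fun u hu => (hderiv u hu).deriv.symm
    rw [interior_Icc]
    exact hg.mapsTo_Ioo

end IsHbinInverse

/-- For fixed `p ∈ [0,1/2]`, `g(t) = h(p ⋆ h⁻¹(1-t)) - (1-t)` is convex on `[0,1]`,
and consequently `g(t) ≤ t·h(p)` for all `t ∈ [0,1]`. -/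
theorem g_convex_and_le (hinv : ℝ → ℝ)
    (hhinv : ∀ y ∈ Set.Icc (0:ℝ) 1, hinv y ∈ Set.Icc (0:ℝ) (1/2) ∧ hbin (hinv y) = y)
    (p : ℝ) (hp : p ∈ Set.Icc (0:ℝ) (1/2)) :
    ConvexOn ℝ (Set.Icc (0:ℝ) 1) (fun t => hbin (bconv p (hinv (1 - t))) - (1 - t)) ∧
    ∀ t ∈ Set.Icc (0:ℝ) 1, hbin (bconv p (hinv (1 - t))) - (1 - t) ≤ t * hbin p := by
  have hg : IsHbinInverse hinv := ⟨fun y hy => (hhinv y hy).1, fun y hy => (hhinv y hy).2⟩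
  set G := fun t => hbin (bconv p (hinv (1 - t))) - (1 - t)
  have hconv : ConvexOn ℝ (Icc 0 1) G :=
    ((hg.convexOn_hbin_bconv_comp hp).comp_one_sub.add
      ((convexOn_id (convex_Icc 0 1)).add_const (-1))).congr fun t _ => by
        simp only [Pi.add_apply, id_eq, G]
        ring
  have hG₀ : G 0 = 0 := by
    simp only [G, sub_zero, hg.apply_one, bconv_half, hbin_half, sub_self]
  have hG₁ : G 1 = hbin p := by
    simp only [G, sub_self, hg.apply_zero, bconv_zero, sub_zero]
  refine ⟨hconv, fun t ht => ?_⟩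
  calc G t = G ((1 - t) • 0 + t • 1) := by simp
    _ ≤ (1 - t) • G 0 + t • G 1 := hconv.2 (left_mem_Icc.2 zero_le_one)
        (right_mem_Icc.2 zero_le_one) (sub_nonneg.2 ht.2) ht.1 (sub_add_cancel 1 t)
    _ = t * hbin p := by simp [hG₀, hG₁]
end
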